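/- Let p be a prime, e ≥ 2, n ≥ 2. Suppose u and v are primitive vectors in (Z/p^e)^n representing distinct points of P_{n,p^e} that reduce to the same point of P_{n,p^{e-1}}. Then the number of points w ∈ P_{n,p^e} with ⟨u,w⟩ = 0 = ⟨v,w⟩ equals (1/φ(p^e)) · ( p^{e(n-1)-1} − p^{(e-1)(n-1)} ). -/

import Mathlib

open scoped Classical

def Primitive {m n : ℕ} (u : Fin n → ZMod m) : Prop :=
  Nat.gcd (Finset.univ.gcd fun i => (u i).val) m = 1

def assoc {m n : ℕ} (u v : Fin n → ZMod m) : Prop :=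
  ∃ lam : (ZMod m)ˣ, v = fun i => (lam : ZMod m) * u i

def projSetoid (m n : ℕ) : Setoid {u : Fin n → ZMod m // Primitive u} where
  r u v := assoc u.1 v.1
  iseqv := by
    refine ⟨fun u => ⟨1, by simp⟩, ?_, ?_⟩
    · rintro u v ⟨l, h⟩
      refine ⟨l⁻¹, ?_⟩
      funext i
      simp [h, ← mul_assoc]
    · rintro u v w ⟨l, hl⟩ ⟨k, hk⟩
      refine ⟨k * l, ?_⟩
      funext i
      simp [hk, hl, mul_assoc]

abbrev ProjPt (m n : ℕ) := Quotient (projSetoid m n)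

noncomputable def theta (n m : ℕ) : ℕ := Nat.card (ProjPt m n)

def orthoPt (m n : ℕ) (U W : ProjPt m n) : Prop :=
  ∀ (u w : {x : Fin n → ZMod m // Primitive x}),
    Quotient.mk (projSetoid m n) u = U → Quotient.mk (projSetoid m n) w = W →
      ∑ i, u.1 i * w.1 i = 0

noncomputable def Bmat (m n : ℕ) : Matrix (ProjPt m n) (ProjPt m n) ℚ :=
  fun U V => (Nat.card {W : ProjPt m n // orthoPt m n U W ∧ orthoPt m n V W} : ℚ)

noncomputable def nuVal (p e : ℕ) (x : ZMod (p^e)) : ℕ := if x = 0 then e else padicValNat p x.val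

noncomputable def nuXi (p e : ℕ) {n : ℕ} (u v : Fin n → ZMod (p^e)) : ℕ :=
  sInf {k | ∃ i j : Fin n, k = nuVal p e (u i * v j - u j * v i)}

noncomputable def red (p e : ℕ) {n : ℕ} (u : Fin n → ZMod (p^e)) : Fin n → ZMod (p^(e-1)) :=
  fun i => ZMod.castHom (pow_dvd_pow p (Nat.sub_le e 1)) (ZMod (p^(e-1))) (u i)

noncomputable def eigMult {ι : Type*} [Fintype ι] (B : Matrix ι ι ℚ) (lam : ℚ) : ℕ :=
  Module.finrank ℚ (LinearMap.ker (B.mulVecLin - lam • (LinearMap.id : (ι → ℚ) →ₗ[ℚ] (ι → ℚ))))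

/-!
Lift the scalar relating `red u` and `red v` to a unit `a`, so that `v = a • u + δ` with
`δ ≡ 0 mod p^(e-1)`. Since `u` and `v` are not proportional, `δ ⬝ᵥ w ≠ 0` for some `w ⊥ u`;
hence on `u^⊥`, a group of order `p^(e(n-1))`, the map `w ↦ δ ⬝ᵥ w` is a nonzero map into
`p^(e-1) ℤ/p^e`, of prime order `p`, and the common orthogonal complement of `u` and `v` has
`p^(e(n-1)-1)` elements. Its non-primitive members are the `w ≡ 0 mod p` orthogonal to `u`
(for them `δ ⬝ᵥ w = 0` automatically); `u ⬝ᵥ ·` maps the `p^((e-1)n)` vectors `≡ 0 mod p`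
onto `p ℤ/p^e`, so there are `p^((e-1)(n-1))` of them. Finally every projective point has
exactly `φ(p^e)` primitive representatives.
-/

theorem AddMonoidHom.card_ker_mul_card_range {G H : Type*} [AddGroup G] [AddGroup H]
    (f : G →+ H) : Nat.card f.ker * Nat.card f.range = Nat.card G := by
  rw [← AddSubgroup.index_ker, AddSubgroup.card_mul_index]

theorem AddMonoidHom.card_ker_mul_card_of_surjective {G H : Type*} [AddGroup G] [AddGroup H]
    (f : G →+ H) (hf : Function.Surjective f) : Nat.card f.ker * Nat.card H = Nat.card G := by
  rw [← f.card_ker_mul_card_range, f.range_eq_top.2 hf, AddSubgroup.card_top]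

theorem AddSubgroup.card_eq_of_le_of_ne_bot {G : Type*} [AddGroup G] {H K : AddSubgroup G}
    (hK : (Nat.card K).Prime) (hHK : H ≤ K) (hH : H ≠ ⊥) : Nat.card H = Nat.card K :=
  (hK.eq_one_or_self_of_dvd _ (AddSubgroup.card_dvd_of_le hHK)).resolve_left
    (mt AddSubgroup.card_eq_one.1 hH)

theorem Nat.card_and_add_card_and_not {α : Type*} [Finite α] (P Q : α → Prop) :
    Nat.card {x // Q x ∧ P x} + Nat.card {x // Q x ∧ ¬P x} = Nat.card {x // Q x} := by
  rw [← Nat.card_sum]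
  exact Nat.card_congr <| ((Equiv.subtypeSubtypeEquivSubtypeInter Q P).symm.sumCongr
    (Equiv.subtypeSubtypeEquivSubtypeInter Q (¬P ·)).symm).trans (Equiv.sumCompl _)

theorem Nat.eq_pow_sub_of_mul_pow_eq {p a b x : ℕ} (hp : 1 < p) (h : x * p ^ a = p ^ b) :
    x = p ^ (b - a) := by
  have hab : a ≤ b := (Nat.pow_dvd_pow_iff_le_right hp).1 ⟨x, by rw [← h, mul_comm]⟩
  rw [← Nat.pow_div hab (by omega), ← h, Nat.mul_div_cancel _ (by positivity)]

def dotProductAddHom {ι R : Type*} [Fintype ι] [NonUnitalNonAssocRing R] (u : ι → R) :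
    (ι → R) →+ R :=
  AddMonoidHom.mk' (u ⬝ᵥ ·) (dotProduct_add u)

theorem dotProduct_eq_zero_and_iff {ι R : Type*} [Fintype ι] [CommRing R] {u v w : ι → R}
    (a : R) :
    (u ⬝ᵥ w = 0 ∧ v ⬝ᵥ w = 0) ↔ (u ⬝ᵥ w = 0 ∧ (v - a • u) ⬝ᵥ w = 0) := by
  rw [sub_dotProduct, smul_dotProduct, smul_eq_mul]
  exact and_congr_right fun h => by rw [h, mul_zero, sub_zero]

section CommRing

variable {ι R : Type*} [Fintype ι] [DecidableEq ι] [CommRing R]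

theorem dotProductAddHom_surjective {u : ι → R} {i₀ : ι} (hu : IsUnit (u i₀)) :
    Function.Surjective (dotProductAddHom u) := by
  obtain ⟨ε, hε⟩ := hu
  refine fun a => ⟨Pi.single i₀ (↑ε⁻¹ * a), ?_⟩
  change u ⬝ᵥ _ = a
  rw [dotProduct_single, ← hε, Units.mul_inv_cancel_left]

theorem exists_dotProduct_eq_zero_ne_zero {u δ : ι → R} {i₀ : ι} (hu : IsUnit (u i₀))
    (hδ : ∀ c : R, δ ≠ c • u) : ∃ w, u ⬝ᵥ w = 0 ∧ δ ⬝ᵥ w ≠ 0 := by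
  obtain ⟨ε, hε⟩ := hu
  by_contra! h
  -- `δ` vanishes on every `u j • e i₀ - u i₀ • e j ⊥ u`, forcing `δ = (δ i₀ / u i₀) • u`
  refine hδ (δ i₀ * ↑ε⁻¹) (funext fun j => ?_)
  have hminor := h (Pi.single i₀ (u j) - Pi.single j (u i₀)) (by
    rw [dotProduct_sub, dotProduct_single, dotProduct_single, mul_comm, sub_self])
  rw [dotProduct_sub, dotProduct_single, dotProduct_single, ← hε] at hminor
  rw [Pi.smul_apply, smul_eq_mul]
  linear_combination (-↑ε⁻¹ : R) * hminor - δ j * ε.mul_inv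

end CommRing

theorem ZMod.castHom_eq_zero_iff {m k : ℕ} [NeZero k] (h : m ∣ k) (x : ZMod k) :
    ZMod.castHom h (ZMod m) x = 0 ↔ m ∣ x.val := by
  conv_lhs => rw [← ZMod.natCast_zmod_val x, map_natCast]
  exact ZMod.natCast_eq_zero_iff _ _

theorem ZMod.card_ker_castHom_mul {m k : ℕ} [NeZero k] (h : m ∣ k) :
    Nat.card (ZMod.castHom h (ZMod m)).toAddMonoidHom.ker * m = k := by
  simpa only [Nat.card_zmod] using
    (ZMod.castHom h (ZMod m)).toAddMonoidHom.card_ker_mul_card_of_surjective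
      (ZMod.castHom_surjective h)

abbrev residueHom (p : ℕ) {e : ℕ} (he : e ≠ 0) : ZMod (p ^ e) →+* ZMod p :=
  ZMod.castHom (dvd_pow_self p he) (ZMod p)

abbrev reduceHom (p e : ℕ) : ZMod (p ^ e) →+* ZMod (p ^ (e - 1)) :=
  ZMod.castHom (pow_dvd_pow p (Nat.sub_le e 1)) (ZMod (p ^ (e - 1)))

theorem projPt_mk_eq_mk_iff {m n : ℕ} {x y : {x : Fin n → ZMod m // Primitive x}} :
    Quotient.mk (projSetoid m n) x = Quotient.mk (projSetoid m n) y ↔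
      ∃ a : (ZMod m)ˣ, y.1 = (a : ZMod m) • x.1 :=
  Quotient.eq

theorem orthoPt_mk_mk_iff {m n : ℕ} (x y : {x : Fin n → ZMod m // Primitive x}) :
    orthoPt m n (Quotient.mk (projSetoid m n) x) (Quotient.mk (projSetoid m n) y) ↔
      x.1 ⬝ᵥ y.1 = 0 := by
  refine ⟨fun h => h x y rfl rfl, fun h x' y' hx hy => ?_⟩
  change x'.1 ⬝ᵥ y'.1 = 0
  obtain ⟨a, hax⟩ := projPt_mk_eq_mk_iff.1 hx
  obtain ⟨b, hby⟩ := projPt_mk_eq_mk_iff.1 hy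
  rw [hax, hby, smul_dotProduct, dotProduct_smul, smul_eq_mul, smul_eq_mul] at h
  simpa using h

theorem card_fun_zmod_pow (p e n : ℕ) : Nat.card (Fin n → ZMod (p ^ e)) = p ^ (e * n) := by
  rw [Nat.card_fun, Nat.card_zmod, Nat.card_fin, pow_mul]

section PrimePower

variable {p e n : ℕ} [Fact p.Prime]

theorem isUnit_iff_residueHom_ne_zero (he : e ≠ 0) (x : ZMod (p ^ e)) :
    IsUnit x ↔ residueHom p he x ≠ 0 := by
  rw [Ne, ZMod.castHom_eq_zero_iff, ← ZMod.natCast_zmod_val x, ZMod.isUnit_iff_coprime,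
    ZMod.val_natCast_of_lt (ZMod.val_lt x), Nat.coprime_pow_right_iff (Nat.pos_of_ne_zero he),
    Nat.coprime_comm, (Fact.out : p.Prime).coprime_iff_not_dvd]

theorem primitive_iff_exists_isUnit (he : e ≠ 0) (w : Fin n → ZMod (p ^ e)) :
    Primitive w ↔ ∃ i, IsUnit (w i) := by
  simp_rw [isUnit_iff_residueHom_ne_zero he, Ne, ZMod.castHom_eq_zero_iff]
  rw [Primitive, ← Nat.coprime_iff_gcd_eq_one, Nat.coprime_pow_right_iff (Nat.pos_of_ne_zero he),
    Nat.coprime_comm, (Fact.out : p.Prime).coprime_iff_not_dvd, Finset.dvd_gcd_iff]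
  simp

theorem not_primitive_iff (he : e ≠ 0) (w : Fin n → ZMod (p ^ e)) :
    ¬Primitive w ↔ ∀ i, residueHom p he (w i) = 0 := by
  simp [primitive_iff_exists_isUnit he, isUnit_iff_residueHom_ne_zero he]

theorem card_ker_reduceHom (he : e ≠ 0) : Nat.card (reduceHom p e).toAddMonoidHom.ker = p := by
  have := ZMod.card_ker_castHom_mul (pow_dvd_pow p (Nat.sub_le e 1))
  rw [Nat.eq_pow_sub_of_mul_pow_eq (Fact.out : p.Prime).one_lt this]
  simp [show e - (e - 1) = 1 by omega]

theorem mul_eq_zero_of_reduceHom_eq_zero_of_residueHom_eq_zero (he : e ≠ 0) {x y : ZMod (p ^ e)}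
    (hx : reduceHom p e x = 0) (hy : residueHom p he y = 0) : x * y = 0 := by
  rw [ZMod.castHom_eq_zero_iff] at hx hy
  have hxy := mul_dvd_mul hx hy
  rw [pow_sub_one_mul he] at hxy
  rwa [← ZMod.natCast_zmod_val x, ← ZMod.natCast_zmod_val y, ← Nat.cast_mul,
    ZMod.natCast_eq_zero_iff]

theorem IsUnit.add_of_reduceHom_eq_zero (he : 2 ≤ e) {a c : ZMod (p ^ e)} (ha : IsUnit a)
    (hc : reduceHom p e c = 0) : IsUnit (a + c) := by
  have he0 : e ≠ 0 := by omega
  have hres : residueHom p he0 c = 0 := by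
    have := congrArg (ZMod.castHom (dvd_pow_self p (by omega : e - 1 ≠ 0)) (ZMod p)) hc
    rwa [map_zero, ← RingHom.comp_apply, ZMod.castHom_comp] at this
  rw [isUnit_iff_residueHom_ne_zero he0] at ha ⊢
  rwa [map_add, hres, add_zero]

theorem card_dotProduct_eq_zero_and_eq_zero (he : e ≠ 0) {u δ : Fin n → ZMod (p ^ e)}
    {i₀ : Fin n} (hu : IsUnit (u i₀)) (hδ : ∀ i, reduceHom p e (δ i) = 0)
    (hδu : ∀ c : ZMod (p ^ e), δ ≠ c • u) :
    Nat.card {w // u ⬝ᵥ w = 0 ∧ δ ⬝ᵥ w = 0} = p ^ (e * (n - 1) - 1) := by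
  set K := (dotProductAddHom u).ker
  have hK : Nat.card K * p ^ e = p ^ (e * n) := by
    have := (dotProductAddHom u).card_ker_mul_card_of_surjective (dotProductAddHom_surjective hu)
    rwa [Nat.card_zmod, card_fun_zmod_pow] at this
  set g := (dotProductAddHom δ).comp K.subtype
  have hrange_le : g.range ≤ (reduceHom p e).toAddMonoidHom.ker := by
    rintro _ ⟨w, rfl⟩
    change reduceHom p e (δ ⬝ᵥ w) = 0
    simp [RingHom.map_dotProduct, Function.comp_def, hδ]
  have hrange_ne : g.range ≠ ⊥ := by
    obtain ⟨w, huw, hδw⟩ := exists_dotProduct_eq_zero_ne_zero hu hδu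
    exact fun h => hδw ((AddSubgroup.eq_bot_iff_forall _).1 h _ ⟨⟨w, huw⟩, rfl⟩)
  have hg : Nat.card g.ker * p = Nat.card K := by
    have hprime : (Nat.card (reduceHom p e).toAddMonoidHom.ker).Prime := by
      rw [card_ker_reduceHom he]; exact Fact.out
    rw [← g.card_ker_mul_card_range,
      AddSubgroup.card_eq_of_le_of_ne_bot hprime hrange_le hrange_ne, card_ker_reduceHom he]
  have hsol : Nat.card {w // u ⬝ᵥ w = 0 ∧ δ ⬝ᵥ w = 0} = Nat.card g.ker :=
    (Nat.card_congr (Equiv.subtypeSubtypeEquivSubtypeInter _ _)).symm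
  have hp : 1 < p := (Fact.out : p.Prime).one_lt
  have hsol' : Nat.card g.ker * p ^ 1 = p ^ (e * n - e) := by
    rw [pow_one, hg, Nat.eq_pow_sub_of_mul_pow_eq hp hK]
  rw [hsol, Nat.eq_pow_sub_of_mul_pow_eq hp hsol', Nat.mul_sub_one]

theorem card_dotProduct_eq_zero_and_not_primitive (he : e ≠ 0) {u : Fin n → ZMod (p ^ e)}
    {i₀ : Fin n} (hu : IsUnit (u i₀)) :
    Nat.card {w // u ⬝ᵥ w = 0 ∧ ¬Primitive w} = p ^ ((e - 1) * (n - 1)) := by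
  set π := residueHom p he
  set N := (π.toAddMonoidHom.compLeft (Fin n)).ker
  have hN : Nat.card N * p ^ n = p ^ (e * n) := by
    have := (π.toAddMonoidHom.compLeft (Fin n)).card_ker_mul_card_of_surjective
      (ZMod.castHom_surjective (dvd_pow_self p he)).comp_left
    rwa [card_fun_zmod_pow, Nat.card_fun, Nat.card_zmod, Nat.card_fin] at this
  set h := (dotProductAddHom u).comp N.subtype
  have hrange : h.range = π.toAddMonoidHom.ker := by
    refine le_antisymm ?_ fun a ha => ?_
    · rintro _ ⟨w, rfl⟩
      have hw : π ∘ w.1 = 0 := w.2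
      change π (u ⬝ᵥ w.1) = 0
      rw [RingHom.map_dotProduct, hw, dotProduct_zero]
    · obtain ⟨ε, hε⟩ := hu
      refine ⟨⟨Pi.single i₀ (↑ε⁻¹ * a), funext fun j => ?_⟩, ?_⟩
      · have ha : π a = 0 := AddMonoidHom.mem_ker.1 ha
        change π ((Pi.single i₀ (↑ε⁻¹ * a) : Fin n → ZMod (p ^ e)) j) = 0
        rcases eq_or_ne j i₀ with rfl | hj
        · rw [Pi.single_eq_same, map_mul, ha, mul_zero]
        · rw [Pi.single_eq_of_ne hj, map_zero]
      · change u ⬝ᵥ Pi.single i₀ (↑ε⁻¹ * a) = a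
        rw [dotProduct_single, ← hε, Units.mul_inv_cancel_left]
  have hπ : Nat.card π.toAddMonoidHom.ker = p ^ (e - 1) :=
    Nat.eq_pow_sub_of_mul_pow_eq (Fact.out : p.Prime).one_lt
      ((pow_one p).symm ▸ ZMod.card_ker_castHom_mul (dvd_pow_self p he))
  have hh : Nat.card h.ker * p ^ (e - 1) = p ^ (e * n - n) := by
    rw [← hπ, ← hrange, h.card_ker_mul_card_range,
      Nat.eq_pow_sub_of_mul_pow_eq (Fact.out : p.Prime).one_lt hN]
  have hsol : Nat.card {w // u ⬝ᵥ w = 0 ∧ ¬Primitive w} = Nat.card h.ker := by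
    refine (Nat.card_congr ((Equiv.subtypeEquivRight fun w => ?_).trans
      (Equiv.subtypeSubtypeEquivSubtypeInter (· ∈ N) (u ⬝ᵥ · = 0)).symm))
    rw [not_primitive_iff he, and_comm, AddMonoidHom.mem_ker, funext_iff]
    rfl
  rw [hsol, Nat.eq_pow_sub_of_mul_pow_eq (Fact.out : p.Prime).one_lt hh, Nat.mul_sub_one,
    Nat.sub_one_mul]

theorem sub_smul_dotProduct_eq_zero_of_not_primitive (he : e ≠ 0) {u v w : Fin n → ZMod (p ^ e)}
    {a : ZMod (p ^ e)} (ha : ∀ i, reduceHom p e (v i - a * u i) = 0) (hw : ¬Primitive w) :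
    (v - a • u) ⬝ᵥ w = 0 :=
  Finset.sum_eq_zero fun i _ =>
    mul_eq_zero_of_reduceHom_eq_zero_of_residueHom_eq_zero he (ha i)
      ((not_primitive_iff he w).1 hw i)

theorem Primitive.units_smul (he : e ≠ 0) {w : Fin n → ZMod (p ^ e)} (hw : Primitive w)
    (a : (ZMod (p ^ e))ˣ) : Primitive ((a : ZMod (p ^ e)) • w) := by
  obtain ⟨i, hi⟩ := (primitive_iff_exists_isUnit he w).1 hw
  exact (primitive_iff_exists_isUnit he _).2 ⟨i, a.isUnit.mul hi⟩

theorem Primitive.units_smul_injective (he : e ≠ 0) {w : Fin n → ZMod (p ^ e)}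
    (hw : Primitive w) :
    Function.Injective fun a : (ZMod (p ^ e))ˣ => (a : ZMod (p ^ e)) • w := by
  obtain ⟨i, hi⟩ := (primitive_iff_exists_isUnit he w).1 hw
  intro a b hab
  exact Units.ext (hi.mul_left_cancel (by simpa [mul_comm] using congrFun hab i))

theorem card_primitive_subtype_mk (he : e ≠ 0) (Q : ProjPt (p ^ e) n → Prop) :
    Nat.card {x : {x : Fin n → ZMod (p ^ e) // Primitive x} // Q (Quotient.mk _ x)} =
      Nat.card {W // Q W} * Nat.totient (p ^ e) := by
  let smulOut (W : {W // Q W}) (a : (ZMod (p ^ e))ˣ) :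
      {x : Fin n → ZMod (p ^ e) // Primitive x} :=
    ⟨(a : ZMod (p ^ e)) • W.1.out.1, W.1.out.2.units_smul he a⟩
  have hmk (W : {W // Q W}) (a) : Quotient.mk _ (smulOut W a) = W.1 :=
    (projPt_mk_eq_mk_iff.2 ⟨a, rfl⟩).symm.trans W.1.out_eq
  let Φ (Wa : {W // Q W} × (ZMod (p ^ e))ˣ) : {x // Q (Quotient.mk _ x)} :=
    ⟨smulOut Wa.1 Wa.2, (hmk Wa.1 Wa.2).symm ▸ Wa.1.2⟩
  have hΦ : Function.Bijective Φ := by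
    refine ⟨fun ⟨W, a⟩ ⟨W', b⟩ hab => ?_, fun ⟨x, hx⟩ => ?_⟩
    · have hW : W = W' := Subtype.ext <| by
        rw [← hmk W a, ← hmk W' b]
        exact congrArg (Quotient.mk _ ∘ Subtype.val) hab
      subst hW
      exact Prod.ext rfl <| W.1.out.2.units_smul_injective he
        (congrArg (Subtype.val ∘ Subtype.val) hab)
    · obtain ⟨a, ha⟩ := projPt_mk_eq_mk_iff.1 (Quotient.out_eq (Quotient.mk _ x))
      exact ⟨(⟨_, hx⟩, a), Subtype.ext (Subtype.ext ha.symm)⟩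
  rw [← Nat.card_congr (Equiv.ofBijective Φ hΦ), Nat.card_prod,
    Nat.card_eq_fintype_card (α := (ZMod (p ^ e))ˣ), ZMod.card_units_eq_totient]

theorem card_orthogonal_pair_primitive (he : e ≠ 0)
    (u v : {x : Fin n → ZMod (p ^ e) // Primitive x}) :
    Nat.card {w // (u.1 ⬝ᵥ w = 0 ∧ v.1 ⬝ᵥ w = 0) ∧ Primitive w} =
      Nat.card {W : ProjPt (p ^ e) n //
        orthoPt (p ^ e) n (Quotient.mk _ u) W ∧ orthoPt (p ^ e) n (Quotient.mk _ v) W} *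
        Nat.totient (p ^ e) := by
  rw [← card_primitive_subtype_mk he]
  refine Nat.card_congr ((Equiv.subtypeEquivRight fun w => and_comm).trans
    ((Equiv.subtypeSubtypeEquivSubtypeInter Primitive _).symm.trans
      (Equiv.subtypeEquivRight fun x => ?_)))
  simp only [orthoPt_mk_mk_iff]

theorem exists_units_reduceHom_sub_eq_zero {u v : Fin n → ZMod (p ^ e)}
    (hred : assoc (red p e u) (red p e v)) :
    ∃ a : (ZMod (p ^ e))ˣ, ∀ i, reduceHom p e (v i - a * u i) = 0 := by
  obtain ⟨μ, hμ⟩ := hred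
  obtain ⟨a, rfl⟩ := ZMod.unitsMap_surjective (pow_dvd_pow p (Nat.sub_le e 1)) μ
  refine ⟨a, fun i => ?_⟩
  rw [map_sub, map_mul, sub_eq_zero]
  exact congrFun hμ i

theorem sub_smul_ne_smul_of_not_assoc (he : 2 ≤ e) {u v : Fin n → ZMod (p ^ e)} {i₀ : Fin n}
    (hu : IsUnit (u i₀)) {a : (ZMod (p ^ e))ˣ} (ha : ∀ i, reduceHom p e (v i - a * u i) = 0)
    (hne : ¬assoc u v) (c : ZMod (p ^ e)) : v - (a : ZMod (p ^ e)) • u ≠ c • u := by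
  intro hc
  have hc0 : reduceHom p e c = 0 := by
    have hci : v i₀ - a * u i₀ = c * u i₀ := congrFun hc i₀
    have := ha i₀
    rw [hci, map_mul] at this
    exact ((hu.map _).mul_left_eq_zero).1 this
  refine hne ⟨(a.isUnit.add_of_reduceHom_eq_zero he hc0).unit, funext fun i => ?_⟩
  rw [IsUnit.unit_spec, add_mul, ← smul_eq_mul c, ← Pi.smul_apply, ← hc]
  simp

end PrimePower

theorem stmt10_general (p e n : ℕ) (hp : p.Prime) (he : 2 ≤ e)
    (u v : Fin n → ZMod (p^e)) (hu : Primitive u) (hv : Primitive v)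
    (hne : ¬ assoc u v) (hred : assoc (red p e u) (red p e v)) :
    Nat.totient (p^e) *
      Nat.card {W : ProjPt (p^e) n //
        orthoPt (p^e) n (Quotient.mk (projSetoid (p^e) n) ⟨u, hu⟩) W ∧
        orthoPt (p^e) n (Quotient.mk (projSetoid (p^e) n) ⟨v, hv⟩) W}
      = p^(e*(n-1)-1) - p^((e-1)*(n-1)) := by
  have := Fact.mk hp
  have he0 : e ≠ 0 := by omega
  obtain ⟨i₀, hi₀⟩ := (primitive_iff_exists_isUnit he0 u).1 hu
  obtain ⟨a, ha⟩ := exists_units_reduceHom_sub_eq_zero hred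
  have hsol (w : Fin n → ZMod (p ^ e)) := dotProduct_eq_zero_and_iff (u := u) (v := v) (w := w) a
  have hall : Nat.card {w // u ⬝ᵥ w = 0 ∧ v ⬝ᵥ w = 0} = p ^ (e * (n - 1) - 1) := by
    rw [Nat.card_congr (Equiv.subtypeEquivRight hsol)]
    exact card_dotProduct_eq_zero_and_eq_zero he0 hi₀ ha
      (sub_smul_ne_smul_of_not_assoc he hi₀ ha hne)
  have hnonprim : Nat.card {w // (u ⬝ᵥ w = 0 ∧ v ⬝ᵥ w = 0) ∧ ¬Primitive w} =
      p ^ ((e - 1) * (n - 1)) := by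
    rw [← card_dotProduct_eq_zero_and_not_primitive he0 hi₀]
    refine Nat.card_congr (Equiv.subtypeEquivRight fun w => ?_)
    rw [hsol]
    exact and_congr_left fun hw =>
      and_iff_left (sub_smul_dotProduct_eq_zero_of_not_primitive he0 ha hw)
  have hsplit := Nat.card_and_add_card_and_not Primitive fun w => u ⬝ᵥ w = 0 ∧ v ⬝ᵥ w = 0
  rw [card_orthogonal_pair_primitive he0 ⟨u, hu⟩ ⟨v, hv⟩, hall, hnonprim] at hsplit
  rw [mul_comm]
  exact Nat.eq_sub_of_add_eq hsplit

theorem stmt10 (p e n : ℕ) (hp : p.Prime) (he : 2 ≤ e) (hn : 2 ≤ n)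
    (u v : Fin n → ZMod (p^e)) (hu : Primitive u) (hv : Primitive v)
    (hne : ¬ assoc u v) (hred : assoc (red p e u) (red p e v)) :
    Nat.totient (p^e) *
      Nat.card {W : ProjPt (p^e) n //
        orthoPt (p^e) n (Quotient.mk (projSetoid (p^e) n) ⟨u, hu⟩) W ∧
        orthoPt (p^e) n (Quotient.mk (projSetoid (p^e) n) ⟨v, hv⟩) W}
      = p^(e*(n-1)-1) - p^((e-1)*(n-1)) :=
  stmt10_general p e n hp he u v hu hv hne hred
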